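/- arXiv:2211.07561 — 2 statements merged into one kernel-verified Lean document; each statement's English description precedes it below -/
import Mathlib

section
/- Let X and X' be complex n×m matrices, and let X = UΣV^H be a compact singular value decomposition of X of rank r, i.e., U is n×r with U^H U = I_r, V is m×r with V^H V = I_r, and Σ is an invertible r×r diagonal matrix with positive real diagonal entries. Define the DMD matrix A = X' V Σ⁻¹ U^H and the reduced matrix Ã = U^H X' V Σ⁻¹. If w̃ is an eigenvector of Ã with eigenvalue λ ≠ 0 (i.e., Ã w̃ = λ w̃ and w̃ ≠ 0), then the exact DMD mode w = X' V Σ⁻¹ w̃ is nonzero and satisfies A w = λ w; in particular every nonzero eigenvalue of Ã is an eigenvalue of A. -/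
open Matrix

/-- Exact DMD modes are eigenvectors of the full DMD matrix.
If `X = U * S * Vᴴ` is a compact SVD of rank `r`, `A = X' * V * S⁻¹ * Uᴴ` is the DMD
matrix and `At = Uᴴ * X' * V * S⁻¹` the reduced matrix, and `wt` is an eigenvector of
`At` with eigenvalue `l ≠ 0`, then the exact DMD mode `w = (X' * V * S⁻¹) *ᵥ wt` is
nonzero and satisfies `A *ᵥ w = l • w`; in particular `l` is an eigenvalue of `A`. -/
theorem exact_dmd_mode_is_eigenvector
    {n m r : ℕ} (X X' : Matrix (Fin n) (Fin m) ℂ)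
    (U : Matrix (Fin n) (Fin r) ℂ) (S : Matrix (Fin r) (Fin r) ℂ)
    (V : Matrix (Fin m) (Fin r) ℂ) (σ : Fin r → ℝ)
    (hX : X = U * S * Vᴴ) (hU : Uᴴ * U = 1) (hV : Vᴴ * V = 1)
    (hS : S = Matrix.diagonal fun i => (σ i : ℂ)) (hσpos : ∀ i, 0 < σ i)
    (hSinv : IsUnit S.det)
    (A : Matrix (Fin n) (Fin n) ℂ) (hA : A = X' * V * S⁻¹ * Uᴴ)
    (At : Matrix (Fin r) (Fin r) ℂ) (hAt : At = Uᴴ * X' * V * S⁻¹)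
    (l : ℂ) (hl : l ≠ 0) (wt : Fin r → ℂ) (hwt : wt ≠ 0)
    (heig : At *ᵥ wt = l • wt) :
    (X' * V * S⁻¹) *ᵥ wt ≠ 0 ∧
      A *ᵥ ((X' * V * S⁻¹) *ᵥ wt) = l • ((X' * V * S⁻¹) *ᵥ wt) ∧
      Module.End.HasEigenvalue (Matrix.toLin' A) l := by
  set w := (X' * V * S⁻¹) *ᵥ wt with hw
  have hUw : Uᴴ *ᵥ w = l • wt := by
    rw [hw, mulVec_mulVec, ← Matrix.mul_assoc, ← Matrix.mul_assoc, ← hAt, heig]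
  have hwne : w ≠ 0 := by
    intro h
    have : (l • wt : Fin r → ℂ) = 0 := by rw [← hUw, h, mulVec_zero]
    exact hwt (by simpa [hl] using smul_eq_zero.mp this)
  have hAw : A *ᵥ w = l • w := by
    rw [hA, ← mulVec_mulVec, hUw, mulVec_smul]
  refine ⟨hwne, hAw, ?_⟩
  exact Module.End.hasEigenvalue_of_hasEigenvector
    ⟨Module.End.mem_eigenspace_iff.mpr (by simpa using hAw), hwne⟩
end

section
/- Let X and X' be complex n×m matrices, and let X = UΣV^H be a compact singular value decomposition of X of rank r (U is n×r with U^H U = I_r, V is m×r with V^H V = I_r, Σ is invertible r×r diagonal with positive real entries). Define A = X' V Σ⁻¹ U^H and Ã = U^H X' V Σ⁻¹. Suppose the columns of X' lie in the column space of U, i.e., U U^H X' = X'. If Ã w̃ = λ w̃, then the projected DMD mode U w̃ is an eigenvector of A: A (U w̃) = λ (U w̃); moreover the exact mode X' V Σ⁻¹ w̃ equals λ · (U w̃). -/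
open Matrix

/-- If the columns of `X'` lie in the column space of the POD modes `U`
(i.e. `U * Uᴴ * X' = X'`), then every eigenvector `wt` of the reduced matrix
`At = Uᴴ * X' * V * S⁻¹` gives a projected DMD mode `U *ᵥ wt` which is an eigenvector
of `A = X' * V * S⁻¹ * Uᴴ`, and the exact mode equals `l • (U *ᵥ wt)`. -/
theorem projected_dmd_mode_is_eigenvector
    {n m r : ℕ} (X X' : Matrix (Fin n) (Fin m) ℂ)
    (U : Matrix (Fin n) (Fin r) ℂ) (S : Matrix (Fin r) (Fin r) ℂ)
    (V : Matrix (Fin m) (Fin r) ℂ) (σ : Fin r → ℝ)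
    (hX : X = U * S * Vᴴ) (hU : Uᴴ * U = 1) (hV : Vᴴ * V = 1)
    (hS : S = Matrix.diagonal fun i => (σ i : ℂ)) (hσpos : ∀ i, 0 < σ i)
    (hSinv : IsUnit S.det)
    (A : Matrix (Fin n) (Fin n) ℂ) (hA : A = X' * V * S⁻¹ * Uᴴ)
    (At : Matrix (Fin r) (Fin r) ℂ) (hAt : At = Uᴴ * X' * V * S⁻¹)
    (hcol : U * Uᴴ * X' = X')
    (l : ℂ) (wt : Fin r → ℂ) (heig : At *ᵥ wt = l • wt) :
    A *ᵥ (U *ᵥ wt) = l • (U *ᵥ wt) ∧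
      (X' * V * S⁻¹) *ᵥ wt = l • (U *ᵥ wt) := by
  have key : (X' * V * S⁻¹) *ᵥ wt = l • (U *ᵥ wt) := by
    have h1 : (X' * V * S⁻¹) = U * At := by
      rw [hAt, ← Matrix.mul_assoc, ← Matrix.mul_assoc, ← Matrix.mul_assoc, hcol]
    rw [h1, ← Matrix.mulVec_mulVec, heig, Matrix.mulVec_smul]
  refine ⟨?_, key⟩
  have h2 : A *ᵥ (U *ᵥ wt) = (X' * V * S⁻¹) *ᵥ wt := by
    rw [hA, Matrix.mulVec_mulVec, Matrix.mul_assoc, hU, Matrix.mul_one]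
  rw [h2, key]
end
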